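/- Let P = ⟨Σ | R⟩ be a semigroup presentation and w ∈ Σ⁺ a base word such that there exist no words a, b, p ∈ Σ⁺ with w = ab, a = ap, and b = pb modulo P. Then no hyperplane of the Squier complex component S(P,w) self-intersects. -/

import Mathlib

namespace Squier

/-- The pair `{u,v}` occurs (in some order) among the defining relations `R`. -/
def Rel {α : Type*} (R : List α → List α → Prop) (u v : List α) : Prop :=
  R u v ∨ R v u

/-- One rewriting step: replace one occurrence of a subword `p` by `q`, where
`(p,q)` or `(q,p)` is a defining relation. -/
def Step {α : Type*} (R : List α → List α → Prop) (x y : List α) : Prop :=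
  ∃ a p q b : List α, Rel R p q ∧ x = a ++ p ++ b ∧ y = a ++ q ++ b

/-- Two words are equal modulo the presentation `⟨α ∣ R⟩`. -/
def EqMod {α : Type*} (R : List α → List α → Prop) : List α → List α → Prop :=
  Relation.ReflTransGen (Step R)

/-- An oriented edge of the Squier complex `S(P)` is a quadruple
`(x, u, v, y)` (written `(x, u→v, y)`) with `(u,v)` or `(v,u)` in `R`,
joining the vertices `xuy` and `xvy`. -/
abbrev SqEdge (α : Type*) := List α × List α × List α × List α

/-- Two edges are parallel (opposite) sides of a square of the Squier
complex: a square `(x, u→v, y, u'→v', z)` arises from two disjoint relation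
applications, and its two pairs of parallel edges are
`(x, u→v, y u' z) ∥ (x, u→v, y v' z)` and
`(x u y, u'→v', z) ∥ (x v y, u'→v', z)`. -/
def EdgePar {α : Type*} (R : List α → List α → Prop) :
    SqEdge α → SqEdge α → Prop := fun e f =>
  (∃ x u v y u' v' z, Rel R u v ∧ Rel R u' v' ∧
      e = (x, u, v, y ++ u' ++ z) ∧ f = (x, u, v, y ++ v' ++ z)) ∨
  (∃ x u' v' y u v z, Rel R u v ∧ Rel R u' v' ∧
      e = (x ++ u' ++ y, u, v, z) ∧ f = (x ++ v' ++ y, u, v, z))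

/-- Two edges are dual to the same hyperplane if they are related by the
equivalence generated by being parallel sides of a square. -/
def DualHyp {α : Type*} (R : List α → List α → Prop) : SqEdge α → SqEdge α → Prop :=
  Relation.ReflTransGen (EdgePar R)

/-- A hyperplane (given by one of its dual edges `e`) self-intersects if it
is dual to two adjacent (non-parallel) edges of a common square
`(x, u→v, y, u'→v', z)`. -/
def SelfIntersects {α : Type*} (R : List α → List α → Prop) (e : SqEdge α) : Prop :=
  ∃ x u v y u' v' z, Rel R u v ∧ Rel R u' v' ∧
    DualHyp R e (x, u, v, y ++ u' ++ z) ∧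
    DualHyp R e (x ++ u ++ y, u', v', z)


lemma step_symm {α : Type} {R : List α → List α → Prop} : Symmetric (Step R) := by
  rintro x y ⟨a, p, q, b, hr, rfl, rfl⟩
  exact ⟨a, q, p, b, hr.symm, rfl, rfl⟩

lemma eqMod_symm {α : Type} {R : List α → List α → Prop} {x y : List α}
    (h : EqMod R x y) : EqMod R y x :=
  by
    haveI : Std.Symm (Step R) := ⟨step_symm⟩
    exact Std.Symm.symm (r := Relation.ReflTransGen (Step R)) x y h

lemma eqMod_append_right {α : Type} {R : List α → List α → Prop} {s t : List α}
    (c : List α) (h : EqMod R s t) : EqMod R (s ++ c) (t ++ c) := by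
  refine Relation.ReflTransGen.lift (· ++ c) ?_ _ _ h
  rintro a b ⟨A, p, q, B, hr, rfl, rfl⟩
  exact ⟨A, p, q, B ++ c, hr, by simp, by simp⟩

lemma eqMod_append_left {α : Type} {R : List α → List α → Prop} {s t : List α}
    (c : List α) (h : EqMod R s t) : EqMod R (c ++ s) (c ++ t) := by
  refine Relation.ReflTransGen.lift (c ++ ·) ?_ _ _ h
  rintro a b ⟨A, p, q, B, hr, rfl, rfl⟩
  exact ⟨c ++ A, p, q, B, hr, by simp, by simp⟩

lemma edgePar_shape {α : Type} {R : List α → List α → Prop} {x u v y : List α}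
    {f : SqEdge α} (h : EdgePar R (x, u, v, y) f) :
    ∃ x' y', f = (x', u, v, y') ∧ EqMod R x x' ∧ EqMod R y y' := by
  rcases h with ⟨X, U, V, Y, U', V', Z, h1, h2, he, rfl⟩ |
    ⟨X, U', V', Y, U, V, Z, h1, h2, he, rfl⟩
  · simp only [Prod.mk.injEq] at he
    obtain ⟨rfl, rfl, rfl, rfl⟩ := he
    exact ⟨x, Y ++ V' ++ Z, rfl, .refl,
      Relation.ReflTransGen.single ⟨Y, U', V', Z, h2, rfl, rfl⟩⟩
  · simp only [Prod.mk.injEq] at he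
    obtain ⟨rfl, rfl, rfl, rfl⟩ := he
    exact ⟨X ++ V' ++ Y, y, rfl,
      Relation.ReflTransGen.single ⟨X, U', V', Y, h2, rfl, rfl⟩, .refl⟩

lemma dualHyp_shape {α : Type} {R : List α → List α → Prop} {x u v y : List α}
    {f : SqEdge α} (h : DualHyp R (x, u, v, y) f) :
    ∃ x' y', f = (x', u, v, y') ∧ EqMod R x x' ∧ EqMod R y y' := by
  induction h with
  | refl => exact ⟨x, y, rfl, .refl, .refl⟩
  | tail h1 h2 ih =>
    obtain ⟨x', y', rfl, hx, hy⟩ := ih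
    obtain ⟨x'', y'', rfl, hx', hy'⟩ := edgePar_shape h2
    exact ⟨x'', y'', rfl, hx.trans hx', hy.trans hy'⟩


/-- Let `⟨α ∣ R⟩` be a semigroup presentation (all relation words nonempty)
and `w` a nonempty base word such that there are no nonempty words `a, b, p`
with `w = ab`, `a = ap` and `b = pb` modulo the presentation. Then no
hyperplane of the component `S(P, w)` of the Squier complex (i.e. no
hyperplane dual to an edge whose endpoint is a word equal to `w` modulo the
presentation) self-intersects. -/
theorem stmt14 {α : Type} (R : List α → List α → Prop)
    (hR : ∀ u v, R u v → u ≠ [] ∧ v ≠ [])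
    (w : List α) (hw : w ≠ [])
    (h : ¬ ∃ a b p : List α, a ≠ [] ∧ b ≠ [] ∧ p ≠ [] ∧
      EqMod R w (a ++ b) ∧ EqMod R a (a ++ p) ∧ EqMod R b (p ++ b)) :
    ∀ x u v y : List α, Rel R u v → EqMod R (x ++ u ++ y) w →
      ¬ SelfIntersects R (x, u, v, y) := by
  intro x u v y huv hwx hSI
  obtain ⟨X, U, V, Y, U', V', Z, h1, h2, hd1, hd2⟩ := hSI
  obtain ⟨X1, Y1, he1, hx1, hy1⟩ := dualHyp_shape hd1
  obtain ⟨X2, Y2, he2, hx2, hy2⟩ := dualHyp_shape hd2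
  simp only [Prod.mk.injEq] at he1 he2
  obtain ⟨rfl, rfl, rfl, rfl⟩ := he1
  obtain ⟨rfl, rfl, rfl, rfl⟩ := he2
  have hu : U' ≠ [] := by
    rcases h2 with hr | hr
    · exact (hR _ _ hr).1
    · exact (hR _ _ hr).2
  apply h
  refine ⟨X ++ U' ++ Y, U' ++ Z, U' ++ Y, by simp [hu], by simp [hu], by simp [hu],
    ?_, ?_, ?_⟩
  · have e1 : EqMod R w (x ++ (U' ++ y)) := by
      simpa [List.append_assoc] using eqMod_symm hwx
    have e2 : EqMod R (x ++ (U' ++ y)) ((X ++ U' ++ Y) ++ (U' ++ y)) :=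
      eqMod_append_right _ hx2
    have e3 : EqMod R ((X ++ U' ++ Y) ++ (U' ++ y)) ((X ++ U' ++ Y) ++ (U' ++ Z)) :=
      eqMod_append_left _ (eqMod_append_left U' hy2)
    exact (e1.trans e2).trans e3
  · have hAX : EqMod R (X ++ U' ++ Y) X := (eqMod_symm hx2).trans hx1
    have e4 : EqMod R ((X ++ U' ++ Y) ++ (U' ++ Y)) (X ++ U' ++ Y) := by
      simpa [List.append_assoc] using eqMod_append_right (U' ++ Y) hAX
    exact eqMod_symm e4
  · have hZ : EqMod R Z (Y ++ U' ++ Z) := (eqMod_symm hy2).trans hy1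
    simpa [List.append_assoc] using eqMod_append_left U' hZ

end Squier
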